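/- arXiv:1001.0191 — 5 statements merged into one kernel-verified Lean document; each statement's English description precedes it below -/
import Mathlib

section
/- In an associative ring of characteristic p (p prime), for any elements X and Y one has \sum_{k=0}^{p-1} X^k Y X^{p-1-k} = (ad X)^{p-1}(Y), where ad X denotes the map Z \mapsto XZ - ZX. -/
/-!
Since `ad X = L_X - R_X` with commuting left and right multiplications, the binomial theorem gives
`(ad X)^{p-1} = ∑ₖ C(p-1, k) L_X^k (-R_X)^{p-1-k}`. In characteristic `p` one has
`C(p-1, k) = (-1)^k`, so every sign collapses to `(-1)^{p-1} = 1`.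
-/

open Finset

section CharP

variable (A : Type*) [Ring A] {p : ℕ} [Fact p.Prime] [CharP A p]

theorem neg_one_pow_char_sub_one : (-1 : A) ^ (p - 1) = 1 := by
  have h := neg_one_pow_char A p
  rwa [← Nat.sub_add_cancel (Fact.out : p.Prime).one_le, pow_succ, mul_neg_one, neg_inj] at h

theorem cast_choose_char_sub_one {k : ℕ} (hk : k < p) : ((p - 1).choose k : A) = (-1) ^ k := by
  induction k with
  | zero => simp
  | succ k ih =>
    -- `C(p-1, k) + C(p-1, k+1) = C(p, k+1)`, which `p` divides
    have hsum : ((p - 1).choose k : A) + ((p - 1).choose (k + 1) : A) = 0 := by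
      rw [← Nat.cast_add, ← Nat.choose_succ_succ', Nat.sub_add_cancel (by omega),
        CharP.cast_eq_zero_iff A p]
      exact (Fact.out : p.Prime).dvd_choose_self k.succ_ne_zero hk
    rw [eq_neg_of_add_eq_zero_right hsum, ih (by omega), pow_succ, mul_neg_one]

variable {A}

theorem Commute.sub_pow_char_sub_one {a b : A} (h : Commute a b) :
    (a - b) ^ (p - 1) = ∑ k ∈ range p, a ^ k * b ^ (p - 1 - k) := by
  have hp : p - 1 + 1 = p := Nat.sub_add_cancel (Fact.out : p.Prime).one_le
  rw [sub_eq_add_neg, h.neg_right.add_pow, hp]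
  refine sum_congr rfl fun k hk => ?_
  have hk : k < p := mem_range.mp hk
  have hsign : (-1 : A) ^ (p - 1 - k) * (-1) ^ k = 1 := by
    rw [← pow_add, Nat.sub_add_cancel (by omega), neg_one_pow_char_sub_one]
  rw [cast_choose_char_sub_one A hk, neg_pow b, mul_assoc, mul_assoc,
    ← ((Commute.neg_one_left b).pow_pow k _).eq, ← mul_assoc ((-1) ^ _), hsign, one_mul]

end CharP

/-- In an associative ring of characteristic `p` (`p` prime), for any elements `X Y`,
`∑_{k=0}^{p-1} X^k Y X^{p-1-k} = (ad X)^{p-1}(Y)` where `ad X : Z ↦ XZ - ZX`. -/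
theorem stmt0 {R : Type*} [Ring R] (p : ℕ) (hp : p.Prime) [CharP R p] (X Y : R) :
    ∑ k ∈ Finset.range p, X ^ k * Y * X ^ (p - 1 - k) =
      (fun Z => X * Z - Z * X)^[p - 1] Y := by
  have : Fact p.Prime := ⟨hp⟩
  have : CharP (Module.End ℤ R) p :=
    charP_of_injective_ringHom (Algebra.lmul_injective (R := ℤ) (A := R)) p
  have had : (fun Z => X * Z - Z * X) = ⇑(LinearMap.mulLeft ℤ X - LinearMap.mulRight ℤ X) := rfl
  rw [had, ← Module.End.pow_apply,
    (LinearMap.commute_mulLeft_right X X).sub_pow_char_sub_one, LinearMap.sum_apply]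
  refine sum_congr rfl fun k _ => ?_
  simp [LinearMap.pow_mulLeft, LinearMap.pow_mulRight, mul_assoc]
end

section
/- Let \mathcal{O} = \bigoplus_{g \in G} \mathcal{O}_g be a grading of \mathcal{O}(m;1) by an abelian group G, and let P = { g \in G : \mathcal{O}_g \not\subseteq \mathfrak{M} }, where \mathfrak{M} is the unique maximal ideal. Then P is a subgroup of G in which every element satisfies g^p = e, i.e., P is an elementary abelian p-subgroup. -/
set_option synthInstance.maxHeartbeats 1000000
set_option maxHeartbeats 1000000

noncomputable abbrev TruncO (F : Type*) [Field F] (p m : ℕ) : Type _ :=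
  MvPolynomial (Fin m) F ⧸ Ideal.span (Set.range fun i : Fin m =>
    (MvPolynomial.X i : MvPolynomial (Fin m) F) ^ p)

noncomputable def xv (F : Type*) [Field F] (p m : ℕ) (i : Fin m) : TruncO F p m :=
  Ideal.Quotient.mk _ (MvPolynomial.X i)

/-!
The augmentation `ψ : 𝒪 → F` (evaluation at `0`) has kernel `𝔐`, so `P` is the set of degrees
of homogeneous elements `z` with `ψ z ≠ 0`. In any grading by a group the unit is homogeneous of
the neutral degree, which gives `e ∈ P` and closure under products. In characteristic `p` the
Frobenius kills `𝔐`, so `z ^ p = ψ(z) ^ p` is a nonzero scalar; it is homogeneous both of degree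
`g ^ p` and of degree `e`, forcing `g ^ p = e`. Finally `g⁻¹ = g ^ (p - 1)` is the degree of
`z ^ (p - 1)`.
-/

open DirectSum

theorem DirectSum.IsInternal.eq_of_mem_of_mem {R M ι : Type*} [Semiring R] [AddCommMonoid M]
    [Module R M] [DecidableEq ι] {𝒜 : ι → Submodule R M} (h : IsInternal 𝒜) {x : M}
    (hx : x ≠ 0) {i j : ι} (hi : x ∈ 𝒜 i) (hj : x ∈ 𝒜 j) : i = j := by
  by_contra hij
  exact hx (Submodule.disjoint_def.mp (h.submodule_iSupIndep.pairwiseDisjoint hij) x hi hj)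

theorem pow_mem_graded {R A ι : Type*} [Semiring R] [Semiring A] [Module R A] [Monoid ι]
    {𝒜 : ι → Submodule R A} (hmul : ∀ i j, ∀ a ∈ 𝒜 i, ∀ b ∈ 𝒜 j, a * b ∈ 𝒜 (i * j))
    (hone : (1 : A) ∈ 𝒜 1) {i : ι} {a : A} (ha : a ∈ 𝒜 i) (n : ℕ) : a ^ n ∈ 𝒜 (i ^ n) := by
  induction n with
  | zero => simpa using hone
  | succ n ih => simpa [pow_succ] using hmul _ _ _ ih _ ha

section Graded

variable {R A ι : Type*} [Ring R] [Ring A] [Module R A] [LeftCancelMonoid ι]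
  {𝒜 : ι → Submodule R A}

/-- The summands `a * eⱼ`, `j ≠ 1`, of `a = a * 1` lie in components other than `𝒜 i`. -/
theorem mul_eq_self_of_finsupp_sum_eq_one
    (hmul : ∀ i j, ∀ a ∈ 𝒜 i, ∀ b ∈ 𝒜 j, a * b ∈ 𝒜 (i * j)) (hind : iSupIndep 𝒜) {e : ι →₀ A}
    (he : ∀ i, e i ∈ 𝒜 i) (hsum : (e.sum fun _ x ↦ x) = 1) ⦃i : ι⦄ ⦃a : A⦄ (ha : a ∈ 𝒜 i) :
    a * e 1 = a := by
  have hrest : ((e.erase 1).sum fun _ x ↦ a * x) ∈ ⨆ (j) (_ : j ≠ i), 𝒜 j := by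
    refine AddSubmonoidClass.finsuppSum_mem _ _ _ fun j hj ↦ ?_
    have hj1 : j ≠ 1 := fun hj1 ↦ hj (by simp [hj1])
    rw [Finsupp.erase_ne hj1]
    exact Submodule.mem_iSup_of_mem (i * j)
      (Submodule.mem_iSup_of_mem (by simpa using hj1) (hmul i j a ha _ (he j)))
  have hdecomp : a = a * e 1 + (e.erase 1).sum fun _ x ↦ a * x := by
    rw [Finsupp.add_sum_erase' e 1 (fun _ x ↦ a * x) (fun _ ↦ mul_zero a), ← Finsupp.mul_sum,
      hsum, mul_one]
  have hdiff : a - a * e 1 ∈ 𝒜 i := sub_mem ha (by simpa using hmul i 1 a ha _ (he 1))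
  have hzero := Submodule.disjoint_def.mp (hind i) _ hdiff (sub_eq_of_eq_add' hdecomp ▸ hrest)
  exact (sub_eq_zero.mp hzero).symm

theorem DirectSum.IsInternal.one_mem_of_mul_mem [DecidableEq ι] (h : IsInternal 𝒜)
    (hmul : ∀ i j, ∀ a ∈ 𝒜 i, ∀ b ∈ 𝒜 j, a * b ∈ 𝒜 (i * j)) :
    (1 : A) ∈ 𝒜 1 := by
  obtain ⟨e, he, hsum⟩ := (Submodule.mem_iSup_iff_exists_finsupp 𝒜 1).mp
    (h.submodule_iSup_eq_top ▸ Submodule.mem_top)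
  have hunit := mul_eq_self_of_finsupp_sum_eq_one hmul h.submodule_iSupIndep he hsum
  have he1 : e 1 = 1 := by
    calc e 1 = (e.sum fun _ x ↦ x) * e 1 := by rw [hsum, one_mul]
      _ = e.sum fun _ x ↦ x := by
        rw [Finsupp.sum_mul]
        exact Finsupp.sum_congr fun j _ ↦ hunit (he j)
      _ = 1 := hsum
  exact he1 ▸ he 1

end Graded

theorem DirectSum.IsInternal.pow_eq_one_of_pow_eq_algebraMap {F A ι : Type*} [Field F] [Ring A]
    [Nontrivial A] [Algebra F A] [LeftCancelMonoid ι] [DecidableEq ι] {𝒜 : ι → Submodule F A}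
    (h : IsInternal 𝒜) (hmul : ∀ i j, ∀ a ∈ 𝒜 i, ∀ b ∈ 𝒜 j, a * b ∈ 𝒜 (i * j))
    {i : ι} {z : A} (hz : z ∈ 𝒜 i) {n : ℕ} {c : F} (hzn : z ^ n = algebraMap F A c)
    (hc : c ≠ 0) : i ^ n = 1 := by
  have hone := h.one_mem_of_mul_mem hmul
  refine h.eq_of_mem_of_mem (x := z ^ n) ?_ (pow_mem_graded hmul hone hz n) ?_
  · rwa [hzn, map_ne_zero]
  · rw [hzn, Algebra.algebraMap_eq_smul_one]
    exact Submodule.smul_mem _ c hone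

theorem MvPolynomial.ker_constantCoeff {σ R : Type*} [CommSemiring R] :
    RingHom.ker (constantCoeff : MvPolynomial σ R →+* R) = Ideal.span (Set.range X) := by
  ext f
  rw [RingHom.mem_ker, ← Set.image_univ, mem_ideal_span_X_image, constantCoeff_eq]
  constructor
  · intro hf d hd
    by_contra! hd0
    exact mem_support_iff.mp hd (by rwa [show d = 0 by ext i; simpa using hd0 i])
  · intro hf
    by_contra hf0
    obtain ⟨i, -, hi⟩ := hf 0 (mem_support_iff.mpr hf0)
    exact hi rfl

section Truncated

variable (F : Type*) [Field F] (p m : ℕ)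

noncomputable def augmentation [NeZero p] : TruncO F p m →ₐ[F] F :=
  Ideal.Quotient.liftₐ _ (MvPolynomial.aeval 0) fun _ ha ↦ RingHom.mem_ker.mp <|
    (Ideal.span_le (I := RingHom.ker (MvPolynomial.aeval 0 : _ →ₐ[F] F))).mpr
      (by rintro _ ⟨i, rfl⟩; simp [NeZero.ne p]) ha

variable {F p m}

theorem augmentation_mk [NeZero p] (f : MvPolynomial (Fin m) F) :
    augmentation F p m (Ideal.Quotient.mk _ f) = MvPolynomial.constantCoeff f := by
  show MvPolynomial.aeval 0 f = _
  simp

theorem ker_augmentation [NeZero p] :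
    RingHom.ker (augmentation F p m) = Ideal.span (Set.range (xv F p m)) := by
  have hle : Ideal.span (Set.range fun i : Fin m ↦ (MvPolynomial.X i : MvPolynomial (Fin m) F) ^ p)
      ≤ Ideal.span (Set.range MvPolynomial.X) :=
    Ideal.span_le.mpr <| Set.range_subset_iff.mpr fun i ↦
      Ideal.pow_mem_of_mem _ (Ideal.subset_span (Set.mem_range_self i)) p (NeZero.pos p)
  ext z
  obtain ⟨f, rfl⟩ := Ideal.Quotient.mk_surjective z
  rw [RingHom.mem_ker, augmentation_mk, ← RingHom.mem_ker, MvPolynomial.ker_constantCoeff,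
    ← Ideal.mem_quotient_iff_mem hle, Ideal.map_span, ← Set.range_comp]
  rfl

instance [NeZero p] : Nontrivial (TruncO F p m) :=
  (augmentation F p m : TruncO F p m →+* F).domain_nontrivial

theorem pow_char_eq_algebraMap_augmentation [Fact p.Prime] [CharP F p] (z : TruncO F p m) :
    z ^ p = algebraMap F _ (augmentation F p m z ^ p) := by
  have : CharP (TruncO F p m) p := charP_of_injective_algebraMap' F p
  have hfrob : (frobenius (TruncO F p m) p).comp (Ideal.Quotient.mk _) =
      ((algebraMap F _).comp (frobenius F p)).comp MvPolynomial.constantCoeff := by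
    refine MvPolynomial.ringHom_ext (fun c ↦ ?_) (fun i ↦ ?_)
    · simp only [RingHom.comp_apply, frobenius_def, MvPolynomial.constantCoeff_C]
      rw [← MvPolynomial.algebraMap_eq, Ideal.Quotient.mk_algebraMap, map_pow]
    · simp only [RingHom.comp_apply, frobenius_def, MvPolynomial.constantCoeff_X, ← map_pow,
        Ideal.Quotient.eq_zero_iff_mem.mpr (Ideal.subset_span (Set.mem_range_self i))]
      simp [NeZero.ne p]
  obtain ⟨f, rfl⟩ := Ideal.Quotient.mk_surjective z
  simpa [augmentation_mk, frobenius_def] using RingHom.congr_fun hfrob f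

end Truncated

theorem stmt4_general {F : Type*} [Field F] (p m : ℕ) (hp : p.Prime) [CharP F p]
    {G : Type*} [CommGroup G] [DecidableEq G]
    (comp : G → Submodule F (TruncO F p m))
    (hdirect : DirectSum.IsInternal comp)
    (hmul : ∀ g h : G, ∀ a ∈ comp g, ∀ b ∈ comp h, a * b ∈ comp (g * h)) :
    let M := Ideal.span (Set.range fun i : Fin m => xv F p m i)
    let P : Set G := {g | ¬ (comp g : Set (TruncO F p m)) ⊆ (M : Set (TruncO F p m))}
    (1 : G) ∈ P ∧ (∀ a ∈ P, ∀ b ∈ P, a * b ∈ P) ∧ (∀ g ∈ P, g⁻¹ ∈ P) ∧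
      ∀ g ∈ P, g ^ p = 1 := by
  intro M P
  have : Fact p.Prime := ⟨hp⟩
  have : NeZero p := ⟨hp.ne_zero⟩
  have hP : ∀ g, g ∈ P ↔ ∃ z ∈ comp g, augmentation F p m z ≠ 0 := fun g ↦ by
    simp [P, M, Set.not_subset, ← ker_augmentation]
  have hone := hdirect.one_mem_of_mul_mem hmul
  have hexp : ∀ g ∈ P, g ^ p = 1 := fun g hg ↦ by
    obtain ⟨z, hz, hψz⟩ := (hP g).mp hg
    exact hdirect.pow_eq_one_of_pow_eq_algebraMap hmul hz
      (pow_char_eq_algebraMap_augmentation z) (pow_ne_zero p hψz)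
  refine ⟨(hP 1).mpr ⟨1, hone, by simp⟩, fun a ha b hb ↦ ?_, fun g hg ↦ ?_, hexp⟩
  · obtain ⟨z, hz, hψz⟩ := (hP a).mp ha
    obtain ⟨w, hw, hψw⟩ := (hP b).mp hb
    exact (hP _).mpr ⟨z * w, hmul a b z hz w hw, by simpa using mul_ne_zero hψz hψw⟩
  · obtain ⟨z, hz, hψz⟩ := (hP g).mp hg
    have hinv : g⁻¹ = g ^ (p - 1) := by rw [pow_sub g hp.one_le, hexp g hg, pow_one, one_mul]
    exact (hP _).mpr ⟨z ^ (p - 1), hinv ▸ pow_mem_graded hmul hone hz (p - 1),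
      by simpa using pow_ne_zero _ hψz⟩

/-- For a `G`-grading `𝒪 = ⨁_g 𝒪_g` of `𝒪(m;1)` by an abelian group `G`, the set
`P = {g : 𝒪_g ⊄ 𝔐}` (where `𝔐` is the unique maximal ideal) is a subgroup of `G`
in which every element satisfies `g^p = e`: an elementary abelian `p`-subgroup. -/
theorem stmt4 {F : Type*} [Field F] [IsAlgClosed F] (p m : ℕ) (hp : p.Prime) [CharP F p]
    {G : Type*} [CommGroup G] [DecidableEq G]
    (comp : G → Submodule F (TruncO F p m))
    (hdirect : DirectSum.IsInternal comp)
    (hmul : ∀ g h : G, ∀ a ∈ comp g, ∀ b ∈ comp h, a * b ∈ comp (g * h)) :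
    let M := Ideal.span (Set.range fun i : Fin m => xv F p m i)
    let P : Set G := {g | ¬ (comp g : Set (TruncO F p m)) ⊆ (M : Set (TruncO F p m))}
    (1 : G) ∈ P ∧ (∀ a ∈ P, ∀ b ∈ P, a * b ∈ P) ∧ (∀ g ∈ P, g⁻¹ ∈ P) ∧
      ∀ g ∈ P, g ^ p = 1 :=
  stmt4_general p m hp comp hdirect hmul
end

section
/- Let L be a Lie algebra graded by a group G (written multiplicatively): L = \bigoplus_{g\in G} L_g with [L_g, L_h] \subseteq L_{gh}. If L is simple (as a Lie algebra), then the subgroup of G generated by the support { g : L_g \neq 0 } is abelian. -/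
/-!
Homogeneous components of non-commuting degrees `a b` bracket to zero, since the bracket lies in
both `L_{ab}` and `L_{ba}`. Fix `g` in the support and let `H` be its centralizer in `G`. The
components `L_l` with `l ∉ H`, together with their pairwise brackets, span an ideal `I`: a
homogeneous element of degree `k ∈ H` moves `L_l` into `L_{kl}` with `kl ∉ H`, and one of degree
`k ∉ H` lies among the spanning components itself. By the first remark and the Jacobi identity,
`L_g` centralizes `I`. If some `h` in the support did not commute with `g`, then `I ≠ 0`, so
`I = L` by simplicity and `L_g ≠ 0` would lie in the centre of `L`, which is trivial.
-/

namespace LieAlgebra.Grading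

variable {R L G : Type*} [CommRing R] [LieRing L] [LieAlgebra R L] [Group G]

lemma lie_eq_zero_of_mul_ne_mul {comp : G → Submodule R L} (hind : iSupIndep comp)
    (hbr : ∀ g h : G, ∀ x ∈ comp g, ∀ y ∈ comp h, ⁅x, y⁆ ∈ comp (g * h))
    {a b : G} (hab : a * b ≠ b * a) {x y : L} (hx : x ∈ comp a) (hy : y ∈ comp b) :
    ⁅x, y⁆ = 0 := by
  have hyx : ⁅x, y⁆ ∈ comp (b * a) := by
    rw [← lie_skew]
    exact neg_mem (hbr _ _ _ hy _ hx)
  exact Submodule.disjoint_def.mp (hind.pairwiseDisjoint hab) _ (hbr _ _ _ hx _ hy) hyx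

variable (comp : G → Submodule R L) (H : Subgroup G)

def homogeneousOutside : Set L := {x | ∃ l ∉ H, x ∈ comp l}

def spanOutside : Submodule R L :=
  Submodule.span R (homogeneousOutside comp H ∪
    Set.image2 (fun x y => ⁅x, y⁆) (homogeneousOutside comp H) (homogeneousOutside comp H))

variable {comp H}

lemma mem_spanOutside_of_mem {l : G} (hl : l ∉ H) {x : L} (hx : x ∈ comp l) :
    x ∈ spanOutside comp H :=
  Submodule.subset_span (.inl ⟨l, hl, hx⟩)

lemma lie_mem_spanOutside_of_notMem
    (hbr : ∀ g h : G, ∀ x ∈ comp g, ∀ y ∈ comp h, ⁅x, y⁆ ∈ comp (g * h))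
    {k l : G} (hl : l ∉ H) {x y : L} (hx : x ∈ comp k) (hy : y ∈ comp l) :
    ⁅x, y⁆ ∈ spanOutside comp H := by
  by_cases hk : k ∈ H
  · refine mem_spanOutside_of_mem (l := k * l) (fun hkl => hl ?_) (hbr _ _ _ hx _ hy)
    simpa using H.mul_mem (H.inv_mem hk) hkl
  · exact Submodule.subset_span (.inr ⟨x, ⟨k, hk, hx⟩, y, ⟨l, hl, hy⟩, rfl⟩)

lemma lie_mem_spanOutside_of_homogeneous
    (hbr : ∀ g h : G, ∀ x ∈ comp g, ∀ y ∈ comp h, ⁅x, y⁆ ∈ comp (g * h))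
    {k : G} {x p : L} (hx : x ∈ comp k) (hp : p ∈ spanOutside comp H) :
    ⁅x, p⁆ ∈ spanOutside comp H := by
  induction hp using Submodule.span_induction with
  | mem y hy =>
    rcases hy with ⟨l, hl, hy⟩ | ⟨y, ⟨l, hl, hy⟩, y', ⟨l', hl', hy'⟩, rfl⟩
    · exact lie_mem_spanOutside_of_notMem hbr hl hx hy
    · rw [leibniz_lie, ← lie_skew y]
      exact add_mem (lie_mem_spanOutside_of_notMem hbr hl' (hbr _ _ _ hx _ hy) hy')
        (neg_mem (lie_mem_spanOutside_of_notMem hbr hl (hbr _ _ _ hx _ hy') hy))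
  | zero => simp
  | add _ _ _ _ h₁ h₂ => simpa only [lie_add] using add_mem h₁ h₂
  | smul c _ _ h => simpa only [lie_smul] using Submodule.smul_mem _ c h

def idealOutside (hbr : ∀ g h : G, ∀ x ∈ comp g, ∀ y ∈ comp h, ⁅x, y⁆ ∈ comp (g * h))
    (htop : iSup comp = ⊤) : LieIdeal R L where
  __ := spanOutside comp H
  lie_mem {x p} hp := by
    have hx : x ∈ ⨆ k, comp k := htop ▸ Submodule.mem_top
    refine Submodule.iSup_induction comp (motive := (⁅·, p⁆ ∈ spanOutside comp H)) hx
      (fun k x hx => lie_mem_spanOutside_of_homogeneous hbr hx hp) (by simp) fun _ _ h₁ h₂ => ?_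
    simpa only [add_lie] using add_mem h₁ h₂

lemma lie_eq_zero_of_mem_spanOutside_centralizer (hind : iSupIndep comp)
    (hbr : ∀ g h : G, ∀ x ∈ comp g, ∀ y ∈ comp h, ⁅x, y⁆ ∈ comp (g * h))
    {g : G} {z p : L} (hz : z ∈ comp g) (hp : p ∈ spanOutside comp (Subgroup.centralizer {g})) :
    ⁅z, p⁆ = 0 := by
  have hout : ∀ y ∈ homogeneousOutside comp (Subgroup.centralizer {g}), ⁅z, y⁆ = 0 := by
    rintro y ⟨l, hl, hy⟩
    rw [Subgroup.mem_centralizer_singleton_iff] at hl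
    exact lie_eq_zero_of_mul_ne_mul hind hbr (Ne.symm hl) hz hy
  induction hp using Submodule.span_induction with
  | mem y hy =>
    rcases hy with hy | ⟨y, hy, y', hy', rfl⟩
    · exact hout y hy
    · simp only [leibniz_lie, hout y hy, hout y' hy', zero_lie, lie_zero, add_zero]
  | zero => simp
  | add _ _ _ _ h₁ h₂ => rw [lie_add, h₁, h₂, add_zero]
  | smul c _ _ h => rw [lie_smul, h, smul_zero]

lemma mul_comm_of_ne_bot [IsSimple R L] (hind : iSupIndep comp) (htop : iSup comp = ⊤)
    (hbr : ∀ g h : G, ∀ x ∈ comp g, ∀ y ∈ comp h, ⁅x, y⁆ ∈ comp (g * h))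
    {g h : G} (hg : comp g ≠ ⊥) (hh : comp h ≠ ⊥) : g * h = h * g := by
  by_contra hgh
  set I := idealOutside (H := Subgroup.centralizer {g}) hbr htop
  have hhI : h ∉ Subgroup.centralizer {g} := by
    rwa [Subgroup.mem_centralizer_singleton_iff, eq_comm]
  have hI : I = ⊤ := by
    refine (IsSimple.eq_bot_or_eq_top I).resolve_left fun hbot => ?_
    obtain ⟨y, hy, hy0⟩ := Submodule.exists_mem_ne_zero_of_ne_bot hh
    have : y ∈ I := mem_spanOutside_of_mem hhI hy
    exact hy0 (by rwa [hbot, LieSubmodule.mem_bot] at this)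
  obtain ⟨z, hz, hz0⟩ := Submodule.exists_mem_ne_zero_of_ne_bot hg
  have hzc : z ∈ center R L := by
    rw [LieModule.mem_maxTrivSubmodule]
    intro x
    have hx : x ∈ I := hI ▸ LieSubmodule.mem_top x
    rw [← lie_skew, lie_eq_zero_of_mem_spanOutside_centralizer hind hbr hz hx, neg_zero]
  rw [center_eq_bot, LieSubmodule.mem_bot] at hzc
  exact hz0 hzc

end LieAlgebra.Grading

/-- If a simple Lie algebra `L` is graded by a group `G`, i.e. `L = ⨁_g L_g` with
`⁅L_g, L_h⁆ ⊆ L_{gh}`, then the subgroup generated by the support is abelian. -/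
theorem stmt5 {F L : Type*} [Field F] [LieRing L] [LieAlgebra F L]
    [LieAlgebra.IsSimple F L] {G : Type*} [Group G] [DecidableEq G]
    (comp : G → Submodule F L)
    (hdirect : DirectSum.IsInternal comp)
    (hbr : ∀ g h : G, ∀ x ∈ comp g, ∀ y ∈ comp h, ⁅x, y⁆ ∈ comp (g * h)) :
    ∀ a ∈ Subgroup.closure {g : G | comp g ≠ ⊥},
      ∀ b ∈ Subgroup.closure {g : G | comp g ≠ ⊥}, a * b = b * a := by
  intro a ha b hb
  have hsupp : ∀ g ∈ {g : G | comp g ≠ ⊥}, ∀ h ∈ {g : G | comp g ≠ ⊥}, g * h = h * g :=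
    fun g hg h hh => LieAlgebra.Grading.mul_comm_of_ne_bot hdirect.submodule_iSupIndep
      hdirect.submodule_iSup_eq_top hbr hg hh
  exact Set.centralizer_centralizer_comm_of_comm hsupp
    a (Subgroup.closure_le_centralizer_centralizer _ ha)
    b (Subgroup.closure_le_centralizer_centralizer _ hb)
end

section
/- Let z_i = 1 + x_i in \mathcal{O}(m;1) (char p > 0) and for a multi-index \alpha set z^\alpha = z_1^{\alpha_1}\cdots z_m^{\alpha_m}. Then for all \alpha, \beta one has [D_{1,2}(z^\alpha), D_{1,2}(z^\beta)] = -(\alpha_1\beta_2 - \alpha_2\beta_1) D_{1,2}(z^{\alpha+\beta-\varepsilon_1-\varepsilon_2}), where exponents are read modulo p and \varepsilon_i is the i-th standard multi-index. -/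
set_option synthInstance.maxHeartbeats 1000000
set_option maxHeartbeats 1000000

/-!
`D_{12}(f) = ∂_2 f ∂_1 - ∂_1 f ∂_2` is the Hamiltonian vector field of `f`. Since `∂_1` and
`∂_2` commute (their commutator kills every `x_k`), a direct computation gives
`[D(f), D(g)] = D(D(f)(g))`, the derivation attached to the Poisson bracket of `f` and `g`.
Because `z_i^p = 1`, the monomials `z^α` with exponents in `ZMod p` multiply by adding
exponents, and `∂_i z^α = α_i z^{α - ε_i}`; hence
`D(z^α)(z^β) = (α_2 β_1 - α_1 β_2) z^{α+β-ε_1-ε_2}`.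
-/

theorem pow_zmod_val_add {M : Type*} [Monoid M] {p : ℕ} [NeZero p] {u : M} (hu : u ^ p = 1)
    (a b : ZMod p) : u ^ (a + b).val = u ^ a.val * u ^ b.val := by
  rw [ZMod.val_add, ← pow_eq_pow_mod _ hu, pow_add]

namespace Derivation

variable {R A : Type*} [CommRing R] [CommRing A] [Algebra R A]

def hamiltonian (d₁ d₂ : Derivation R A A) (f : A) : Derivation R A A :=
  d₂ f • d₁ - d₁ f • d₂

variable (d₁ d₂ : Derivation R A A)

theorem hamiltonian_apply (f g : A) : hamiltonian d₁ d₂ f g = d₂ f * d₁ g - d₁ f * d₂ g :=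
  rfl

theorem hamiltonian_smul (c : R) (f : A) :
    hamiltonian d₁ d₂ (c • f) = c • hamiltonian d₁ d₂ f := by
  ext g
  simp only [hamiltonian_apply, map_smul, smul_apply, smul_mul_assoc, smul_sub]

theorem lie_hamiltonian {d₁ d₂ : Derivation R A A} (h : ⁅d₁, d₂⁆ = 0) (f g : A) :
    ⁅hamiltonian d₁ d₂ f, hamiltonian d₁ d₂ g⁆ = hamiltonian d₁ d₂ (hamiltonian d₁ d₂ f g) := by
  have hcomm (a : A) : d₂ (d₁ a) = d₁ (d₂ a) := by
    rw [eq_comm, ← sub_eq_zero, ← commutator_apply, h, zero_apply]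
  ext w
  simp only [commutator_apply, hamiltonian_apply, map_sub, leibniz, smul_eq_mul, hcomm]
  ring

theorem map_prod_eq_zero {ι : Type*} (d : Derivation R A A) (s : Finset ι) {f : ι → A}
    (h : ∀ j ∈ s, d (f j) = 0) : d (∏ j ∈ s, f j) = 0 := by
  classical
  induction s using Finset.induction_on with
  | empty => simp
  | insert j s hj ih =>
    rw [Finset.prod_insert hj, leibniz, h j (s.mem_insert_self j),
      ih fun k hk => h k (Finset.mem_insert_of_mem hk), smul_zero, smul_zero, add_zero]

theorem map_pow_zmod_val {p : ℕ} [NeZero p] [CharP R p] (d : Derivation R A A) (u : A)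
    (a : ZMod p) :
    d (u ^ a.val) = ZMod.castHom dvd_rfl R a • u ^ (a - 1).val • d u := by
  by_cases ha : a = 0
  · simp [ha]
  have hp1 : p ≠ 1 := by
    rintro rfl
    exact ha (Subsingleton.elim _ _)
  have h1 : (1 : ZMod p).val ≤ a.val := by
    rw [ZMod.val_one'' hp1]
    exact ZMod.val_pos.mpr ha
  rw [leibniz_pow, ZMod.val_sub h1, ZMod.val_one'' hp1, ← Nat.cast_smul_eq_nsmul R,
    ZMod.natCast_val, ZMod.castHom_apply]

end Derivation

section ProdPowVal

variable {ι A : Type*} [Fintype ι] [CommRing A] {p : ℕ}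

def prodPowVal (z : ι → A) (a : ι → ZMod p) : A :=
  ∏ i, z i ^ (a i).val

variable [NeZero p] {z : ι → A}

theorem prodPowVal_add (hz : ∀ i, z i ^ p = 1) (a b : ι → ZMod p) :
    prodPowVal z (a + b) = prodPowVal z a * prodPowVal z b := by
  simp only [prodPowVal, Pi.add_apply, pow_zmod_val_add (hz _), Finset.prod_mul_distrib]

variable [DecidableEq ι] {R : Type*} [CommRing R] [Algebra R A] [CharP R p]

theorem Derivation.map_prodPowVal {d : Derivation R A A} {i : ι}
    (hd : ∀ j, d (z j) = if i = j then 1 else 0) (a : ι → ZMod p) :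
    d (prodPowVal z a) = ZMod.castHom dvd_rfl R (a i) • prodPowVal z (a - Pi.single i 1) := by
  have hrest : ∏ j ∈ Finset.univ.erase i, z j ^ ((a - Pi.single i 1 : ι → ZMod p) j).val
      = ∏ j ∈ Finset.univ.erase i, z j ^ (a j).val :=
    Finset.prod_congr rfl fun j hj => by
      rw [Pi.sub_apply, Pi.single_eq_of_ne (Finset.ne_of_mem_erase hj), sub_zero]
  have hrest_const : d (∏ j ∈ Finset.univ.erase i, z j ^ (a j).val) = 0 :=
    d.map_prod_eq_zero _ fun j hj => by
      rw [leibniz_pow, hd, if_neg (Finset.ne_of_mem_erase hj).symm, smul_zero, smul_zero]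
  rw [prodPowVal, prodPowVal, ← Finset.mul_prod_erase _ _ (Finset.mem_univ i),
    ← Finset.mul_prod_erase _ _ (Finset.mem_univ i), hrest, leibniz, hrest_const,
    d.map_pow_zmod_val, hd, if_pos rfl, Pi.sub_apply, Pi.single_eq_same, smul_zero, zero_add,
    smul_eq_mul, smul_eq_mul, mul_one, mul_smul_comm, mul_comm]

theorem Derivation.hamiltonian_prodPowVal (hz : ∀ i, z i ^ p = 1) {d₁ d₂ : Derivation R A A}
    {i k : ι} (h₁ : ∀ j, d₁ (z j) = if i = j then 1 else 0)
    (h₂ : ∀ j, d₂ (z j) = if k = j then 1 else 0) (a b : ι → ZMod p) :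
    hamiltonian d₁ d₂ (prodPowVal z a) (prodPowVal z b)
      = ZMod.castHom dvd_rfl R (a k * b i - a i * b k)
          • prodPowVal z (a + b - Pi.single i 1 - Pi.single k 1) := by
  rw [hamiltonian_apply, map_prodPowVal h₁, map_prodPowVal h₁, map_prodPowVal h₂,
    map_prodPowVal h₂, smul_mul_smul_comm, smul_mul_smul_comm, ← prodPowVal_add hz,
    ← prodPowVal_add hz, map_sub, map_mul, map_mul, sub_smul]
  congr 3 <;> abel

end ProdPowVal

namespace TruncO

variable {F : Type*} [Field F] {p m : ℕ}

theorem one_add_xv_pow (hp : p.Prime) [CharP F p] (i : Fin m) : (1 + xv F p m i) ^ p = 1 := by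
  have := Fact.mk hp
  have hmk : (1 + xv F p m i) ^ p = Ideal.Quotient.mk _ ((1 + MvPolynomial.X i) ^ p) := by
    simp [xv]
  rw [hmk, add_pow_char, one_pow, map_add, map_one, add_eq_left,
    Ideal.Quotient.eq_zero_iff_mem]
  exact Ideal.subset_span ⟨i, rfl⟩

theorem adjoin_range_xv : Algebra.adjoin F (Set.range (xv F p m)) = ⊤ := by
  have hxv : Set.range (xv F p m) = Ideal.Quotient.mkₐ F _ '' Set.range MvPolynomial.X := by
    rw [← Set.range_comp]
    rfl
  rw [hxv, ← AlgHom.map_adjoin, MvPolynomial.adjoin_range_X, Algebra.map_top,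
    AlgHom.range_eq_top]
  exact Ideal.Quotient.mkₐ_surjective F _

theorem derivation_ext {d₁ d₂ : Derivation F (TruncO F p m) (TruncO F p m)}
    (h : ∀ i, d₁ (xv F p m i) = d₂ (xv F p m i)) : d₁ = d₂ :=
  Derivation.ext_of_adjoin_eq_top _ adjoin_range_xv (Set.forall_mem_range.mpr h)

end TruncO

/-- With `z_i = 1 + x_i` and `z^α = ∏ z_i^{α_i}` (exponents read modulo `p`), one has
`[D_{1,2}(z^α), D_{1,2}(z^β)] = -(α_1 β_2 - α_2 β_1) D_{1,2}(z^{α+β-ε_1-ε_2})`. -/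
theorem stmt7 {F : Type*} [Field F] (p m : ℕ) (hp : p.Prime) [CharP F p] (hm : 2 ≤ m)
    (pd : Fin m → Derivation F (TruncO F p m) (TruncO F p m))
    (hpd : ∀ i j : Fin m, pd i (xv F p m j) = if i = j then 1 else 0)
    (α β : Fin m → ZMod p) :
    let i0 : Fin m := ⟨0, by omega⟩
    let i1 : Fin m := ⟨1, by omega⟩
    let z : Fin m → TruncO F p m := fun i => 1 + xv F p m i
    let zp : (Fin m → ZMod p) → TruncO F p m := fun a => ∏ i, z i ^ (a i).val
    let D : Fin m → Fin m → TruncO F p m → Derivation F (TruncO F p m) (TruncO F p m) :=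
      fun i j f => (pd j f) • pd i - (pd i f) • pd j
    ⁅D i0 i1 (zp α), D i0 i1 (zp β)⁆ =
      (-(((α i0 * β i1 - α i1 * β i0 : ZMod p)).val : F)) •
        D i0 i1 (zp (α + β - Pi.single i0 1 - Pi.single i1 1)) := by
  intro i0 i1 z zp D
  have : NeZero p := ⟨hp.ne_zero⟩
  have hz (i : Fin m) : z i ^ p = 1 := TruncO.one_add_xv_pow hp i
  have hpd_z (i j : Fin m) : pd i (z j) = if i = j then 1 else 0 := by
    rw [map_add, Derivation.map_one_eq_zero, zero_add, hpd]
  have hcomm : ⁅pd i0, pd i1⁆ = 0 := TruncO.derivation_ext fun k => by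
    simp only [Derivation.commutator_apply, hpd, apply_ite, Derivation.map_one_eq_zero,
      map_zero, ite_self, sub_self, Derivation.zero_apply]
  change ⁅Derivation.hamiltonian (pd i0) (pd i1) (prodPowVal z α),
      Derivation.hamiltonian (pd i0) (pd i1) (prodPowVal z β)⁆
    = _ • Derivation.hamiltonian (pd i0) (pd i1) (prodPowVal z _)
  rw [Derivation.lie_hamiltonian hcomm,
    Derivation.hamiltonian_prodPowVal hz (hpd_z i0) (hpd_z i1), Derivation.hamiltonian_smul,
    ZMod.natCast_val, ← ZMod.castHom_apply (h := dvd_rfl), ← map_neg, neg_sub]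
end

section
/- Let z_i = 1+x_i in \mathcal{O}(2r;1), char p > 0. For all multi-indices \beta, the element D_H(z^\beta) is an eigenvector of ad D_H(z_1 z_{r+1}) with eigenvalue \beta_{r+1} - \beta_1 (an element of the prime field). -/
set_option synthInstance.maxHeartbeats 1000000
set_option maxHeartbeats 1000000

/-!
`D_H(f)(g) = ∑ σ(i) ∂_i f ∂_{i'} g` is the Poisson bracket `{f, g}`. It is antisymmetric, and since
the partial derivatives commute each `∂_j` is a derivation of it; evaluating on the generators `x_k`
this gives `⁅D_H f, D_H g⁆ = D_H {f, g}`. For `f = z_1 z_{r+1}` the bracket `{f, -}` is the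
Euler-type operator `z_{r+1} ∂_{r+1} - z_1 ∂_1`, which multiplies `z^β` by `β_{r+1} - β_1`.
-/

open Finset Function

theorem Derivation.finset_sum_apply {ι R A M : Type*} [CommSemiring R] [CommSemiring A]
    [AddCommMonoid M] [Algebra R A] [Module A M] [Module R M]
    (s : Finset ι) (D : ι → Derivation R A M) (a : A) :
    (∑ i ∈ s, D i) a = ∑ i ∈ s, D i a := by
  rw [← Derivation.coeFnAddMonoidHom_apply, map_sum, Finset.sum_apply]
  rfl

section Partials

variable {ι F A : Type*} [DecidableEq ι] [CommRing F] [CommRing A] [Algebra F A]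
  {d : ι → Derivation F A A}

theorem partial_comm_of_adjoin_eq_top {x : ι → A} (hx : Algebra.adjoin F (Set.range x) = ⊤)
    (hd : ∀ i j, d i (x j) = if i = j then 1 else 0) (i j : ι) (a : A) :
    d i (d j a) = d j (d i a) := by
  have hcomm : ⁅d i, d j⁆ = 0 :=
    Derivation.ext_of_adjoin_eq_top _ hx <| by
      rintro _ ⟨k, rfl⟩
      simp only [Derivation.commutator_apply, hd, apply_ite (d _), Derivation.map_one_eq_zero,
        map_zero, ite_self, sub_self, Derivation.zero_apply]
  rw [← sub_eq_zero, ← Derivation.commutator_apply, hcomm, Derivation.zero_apply]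

theorem mul_partial_prod_pow [Fintype ι] {y : ι → A}
    (hd : ∀ i j, d i (y j) = if i = j then 1 else 0) (j : ι) (n : ι → ℕ) :
    y j * d j (∏ l, y l ^ n l) = (n j : F) • ∏ l, y l ^ n l := by
  have hrest : d j (∏ l ∈ univ.erase j, y l ^ n l) = 0 :=
    prod_induction _ (fun a => d j a = 0)
      (fun a b ha hb => by rw [Derivation.leibniz, ha, hb, smul_zero, smul_zero, add_zero])
      (Derivation.map_one_eq_zero _)
      (fun l hl => by rw [Derivation.leibniz_pow, hd, if_neg (ne_of_mem_erase hl).symm,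
        smul_zero, smul_zero])
  rw [← mul_prod_erase univ _ (mem_univ j), Derivation.leibniz, hrest, smul_zero, zero_add,
    Derivation.leibniz_pow, hd, if_pos rfl]
  rcases eq_or_ne (n j) 0 with hn | hn
  · simp [hn]
  · rw [← mul_pow_sub_one hn (y j), smul_eq_mul, smul_eq_mul, mul_one, nsmul_eq_mul,
      Algebra.smul_def, map_natCast]
    ring

end Partials

section Hamiltonian

variable {ι F A : Type*} [Fintype ι] [CommRing F] [CommRing A] [Algebra F A]
  (σ : ι → F) (τ : ι → ι) (d : ι → Derivation F A A)

def hamiltonian (f : A) : Derivation F A A :=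
  ∑ i, (σ i • d i f) • d (τ i)

variable {σ τ d}

theorem hamiltonian_apply (f g : A) :
    hamiltonian σ τ d f g = ∑ i, σ i • (d i f * d (τ i) g) := by
  rw [hamiltonian, Derivation.finset_sum_apply]
  exact sum_congr rfl fun i _ => by
    rw [Derivation.smul_apply, smul_eq_mul, smul_mul_assoc]

theorem hamiltonian_smul (c : F) (f : A) :
    hamiltonian σ τ d (c • f) = c • hamiltonian σ τ d f := by
  simp only [hamiltonian, Derivation.map_smul, smul_sum, smul_assoc]
  exact sum_congr rfl fun i _ => smul_comm _ _ _

theorem hamiltonian_apply_of_dual [DecidableEq ι] (hτ : Involutive τ) {x : ι → A}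
    (hd : ∀ i j, d i (x j) = if i = j then 1 else 0) (f : A) (j : ι) :
    hamiltonian σ τ d f (x j) = σ (τ j) • d (τ j) f := by
  simp only [hamiltonian_apply, hd, hτ.eq_iff, mul_ite, mul_one, mul_zero, smul_ite, smul_zero,
    sum_ite_eq', mem_univ, if_true]

theorem hamiltonian_apply_swap (hτ : Involutive τ) (hσ : ∀ i, σ (τ i) = -σ i) (f g : A) :
    hamiltonian σ τ d f g = -hamiltonian σ τ d g f := by
  rw [hamiltonian_apply, hamiltonian_apply, ← Equiv.sum_comp (hτ.toPerm τ)]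
  simp only [Involutive.coe_toPerm, hτ _, hσ, neg_smul, sum_neg_distrib, mul_comm]

theorem partial_hamiltonian_apply (hcomm : ∀ i j a, d i (d j a) = d j (d i a))
    (j : ι) (f g : A) :
    d j (hamiltonian σ τ d f g) = hamiltonian σ τ d (d j f) g + hamiltonian σ τ d f (d j g) := by
  simp only [hamiltonian_apply, map_sum, ← sum_add_distrib]
  refine sum_congr rfl fun i _ => ?_
  rw [Derivation.map_smul, Derivation.leibniz, hcomm j i f, hcomm j (τ i) g, ← smul_add,
    smul_eq_mul, smul_eq_mul, add_comm, mul_comm (d (τ i) g)]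

theorem lie_hamiltonian [DecidableEq ι] {x : ι → A} (hx : Algebra.adjoin F (Set.range x) = ⊤)
    (hd : ∀ i j, d i (x j) = if i = j then 1 else 0)
    (hτ : Involutive τ) (hσ : ∀ i, σ (τ i) = -σ i) (f g : A) :
    ⁅hamiltonian σ τ d f, hamiltonian σ τ d g⁆ = hamiltonian σ τ d (hamiltonian σ τ d f g) := by
  refine Derivation.ext_of_adjoin_eq_top _ hx ?_
  rintro _ ⟨k, rfl⟩
  rw [Derivation.commutator_apply, hamiltonian_apply_of_dual hτ hd,
    hamiltonian_apply_of_dual hτ hd, hamiltonian_apply_of_dual hτ hd, Derivation.map_smul,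
    Derivation.map_smul,
    partial_hamiltonian_apply (partial_comm_of_adjoin_eq_top hx hd),
    hamiltonian_apply_swap hτ hσ (d (τ k) f), smul_add, smul_neg, sub_eq_add_neg, add_comm]

theorem hamiltonian_mul_apply_prod_pow [DecidableEq ι] {y : ι → A}
    (hd : ∀ i j, d i (y j) = if i = j then 1 else 0) {a b : ι} (hab : τ a = b) (hba : τ b = a)
    (ha : σ a = 1) (hb : σ b = -1) (n : ι → ℕ) :
    hamiltonian σ τ d (y a * y b) (∏ l, y l ^ n l) = ((n b : F) - n a) • ∏ l, y l ^ n l := by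
  have hpartial :
      ∀ i, d i (y a * y b) = (if i = a then y b else 0) + (if i = b then y a else 0) := by
    intro i
    rw [Derivation.leibniz, hd, hd, add_comm]
    split_ifs <;> simp
  simp only [hamiltonian_apply, hpartial, add_mul, ite_mul, zero_mul, smul_add, smul_ite,
    smul_zero, sum_add_distrib, sum_ite_eq', mem_univ, if_true, hab, hba, ha, hb, one_smul,
    neg_smul, mul_partial_prod_pow hd, sub_smul]
  abel

end Hamiltonian

section Symplectic

variable {r : ℕ} {τ : Fin (2 * r) → Fin (2 * r)}
  (hτ : ∀ i, (τ i : ℕ) = if (i : ℕ) < r then i + r else i - r)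
include hτ

theorem involutive_of_val_eq : Involutive τ := fun i => by
  ext
  rw [hτ, hτ]
  split_ifs <;> omega

theorem apply_of_val_eq_neg {F : Type*} [Ring F] {σ : Fin (2 * r) → F}
    (hσ : ∀ i, σ i = if (i : ℕ) < r then 1 else -1) (i : Fin (2 * r)) : σ (τ i) = -σ i := by
  rw [hσ, hσ, hτ]
  split_ifs <;> first | omega | simp

end Symplectic

theorem adjoin_range_xv (F : Type*) [Field F] (p m : ℕ) :
    Algebra.adjoin F (Set.range (xv F p m)) = ⊤ := by
  have hrange : Set.range (xv F p m) =
      Ideal.Quotient.mkₐ F _ '' Set.range (MvPolynomial.X : Fin m → MvPolynomial (Fin m) F) := by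
    rw [← Set.range_comp]
    rfl
  rw [hrange, ← AlgHom.map_adjoin, MvPolynomial.adjoin_range_X, Algebra.map_top,
    AlgHom.range_eq_top]
  exact Ideal.Quotient.mkₐ_surjective F _

/-- With `z_i = 1 + x_i` in `𝒪(2r;1)`, each `D_H(z^β)` is an eigenvector of
`ad D_H(z_1 z_{r+1})` with eigenvalue `β_{r+1} - β_1 ∈ GF(p)`. -/
theorem stmt12 {F : Type*} [Field F] (p r : ℕ) (hp : p.Prime) [CharP F p] (hr : 1 ≤ r)
    (pd : Fin (2 * r) → Derivation F (TruncO F p (2 * r)) (TruncO F p (2 * r)))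
    (hpd : ∀ i j : Fin (2 * r), pd i (xv F p (2 * r) j) = if i = j then 1 else 0)
    (β : Fin (2 * r) → ZMod p) :
    let pr : Fin (2 * r) → Fin (2 * r) := fun i =>
      if h : (i : ℕ) < r then ⟨(i : ℕ) + r, by omega⟩
      else ⟨(i : ℕ) - r, by have := i.isLt; omega⟩
    let σ : Fin (2 * r) → F := fun i => if (i : ℕ) < r then 1 else -1
    let DH : TruncO F p (2 * r) →
        Derivation F (TruncO F p (2 * r)) (TruncO F p (2 * r)) :=
      fun f => ∑ i, (σ i • pd i f) • pd (pr i)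
    let i0 : Fin (2 * r) := ⟨0, by omega⟩
    let ir : Fin (2 * r) := ⟨r, by omega⟩
    let z : Fin (2 * r) → TruncO F p (2 * r) := fun i => 1 + xv F p (2 * r) i
    let zp : (Fin (2 * r) → ZMod p) → TruncO F p (2 * r) :=
      fun a => ∏ i, z i ^ (a i).val
    ⁅DH (z i0 * z ir), DH (zp β)⁆ =
      (((β ir - β i0 : ZMod p)).val : F) • DH (zp β) := by
  intro pr σ DH i0 ir z zp
  have : NeZero p := ⟨hp.ne_zero⟩
  have hz : ∀ i j, pd i (z j) = if i = j then 1 else 0 := fun i j => by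
    rw [map_add, Derivation.map_one_eq_zero, zero_add, hpd]
  have hpr : ∀ i, (pr i : ℕ) = if (i : ℕ) < r then i + r else i - r := fun i => by
    simp only [pr]
    split_ifs <;> rfl
  have hpr0 : pr i0 = ir :=
    Fin.ext <| (hpr i0).trans <| (if_pos (by simp [i0]; omega)).trans (zero_add r)
  have heigen : DH (z i0 * z ir) (zp β) = (((β ir).val : F) - (β i0).val) • zp β :=
    hamiltonian_mul_apply_prod_pow hz hpr0 (by rw [← hpr0]; exact involutive_of_val_eq hpr _)
      (by simp [σ, i0]; omega) (by simp [σ, ir]) _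
  have hcast : ((β ir - β i0).val : F) = (β ir).val - (β i0).val := by
    simp [ZMod.natCast_val]
  calc ⁅DH (z i0 * z ir), DH (zp β)⁆ = DH (DH (z i0 * z ir) (zp β)) :=
        lie_hamiltonian (adjoin_range_xv F p (2 * r)) hpd (involutive_of_val_eq hpr)
          (apply_of_val_eq_neg hpr fun _ => rfl) _ _
    _ = _ := by rw [heigen, hcast]; exact hamiltonian_smul _ _
end
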